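/- arXiv:0809.3970 — 2 statements merged into one kernel-verified Lean document; each statement's English description precedes it below -/
import Mathlib

section
/- Define M(z) = Z(z) · diag(X(z)^{-1}, I_r). Then M is analytic on ℂ∖ℝ, has continuous boundary values M₊, M₋ on ℝ, and satisfies the jump relation M₊(z) = M₋(z) J_M(z) for z ∈ ℝ, where J_M(z) is the (r+2)×(r+2) block matrix [[I₂, x(z) v(z)^t e^{-V(z)}],[0, I_r]] with x(z) = (π_n(z), −2πi κ_{n-1}² π_{n-1}(z))^t. -/
open MeasureTheory Filter Matrix Asymptotics Polynomial

noncomputable section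

/-- Inverse of the asymptotic diagonal matrix `diag(z^n, z^{-n+r}, z^{-1}, ..., z^{-1})`. -/
def DinvM (n r : ℕ) (z : ℂ) : Matrix (Fin 2 ⊕ Fin r) (Fin 2 ⊕ Fin r) ℂ :=
  Matrix.diagonal (Sum.elim ![z ^ (-(n : ℤ)), z ^ ((n : ℤ) - (r : ℤ))] fun _ => z)

/-- The jump matrix `J_Z`: the identity except that its first row is
`(1, e^{-V(x)}, e^{-V(x)+a_1 x}, ..., e^{-V(x)+a_r x})`. -/
def JZmat (r : ℕ) (V : ℝ → ℝ) (a : Fin r → ℝ) (x : ℝ) :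
    Matrix (Fin 2 ⊕ Fin r) (Fin 2 ⊕ Fin r) ℂ :=
  1 + Matrix.of fun i j =>
    if i = Sum.inl 0 then
      Sum.elim ![0, Complex.exp ((-(V x) : ℝ) : ℂ)]
        (fun k => Complex.exp ((a k * x - V x : ℝ) : ℂ)) j
    else 0

/-- The column vector `x(z) = (π_n(z), −2πi κ_{n-1}² π_{n-1}(z))^t`. -/
def xcol (n : ℕ) (p : ℕ → Polynomial ℝ) (κ : ℕ → ℝ) (z : ℂ) : Fin 2 → ℂ :=
  ![Polynomial.aeval z (p n),
    -(2 * Real.pi * Complex.I) * ((κ (n - 1) : ℝ) : ℂ) ^ 2 * Polynomial.aeval z (p (n - 1))]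

/-- `M(z) = Z(z) · diag(X(z)^{-1}, I_r)`. -/
def Mfun (r : ℕ) (Z : ℂ → Matrix (Fin 2 ⊕ Fin r) (Fin 2 ⊕ Fin r) ℂ)
    (X : ℂ → Matrix (Fin 2) (Fin 2) ℂ) (z : ℂ) :
    Matrix (Fin 2 ⊕ Fin r) (Fin 2 ⊕ Fin r) ℂ :=
  Z z * Matrix.fromBlocks (X z)⁻¹ 0 0 1

/-- The jump matrix `J_M = [[I₂, x(z) v(z)^t e^{-V(z)}],[0, I_r]]`. -/
def JMmat (n r : ℕ) (V : ℝ → ℝ) (p : ℕ → Polynomial ℝ) (κ : ℕ → ℝ)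
    (a : Fin r → ℝ) (x : ℝ) : Matrix (Fin 2 ⊕ Fin r) (Fin 2 ⊕ Fin r) ℂ :=
  Matrix.fromBlocks 1
    (Matrix.of fun i j => xcol n p κ (x : ℂ) i * Complex.exp ((a j * x - V x : ℝ) : ℂ))
    0 1

/-!
On the real line, `M₋⁻¹ M₊ = diag(X₋, I) J_Z diag(X₊⁻¹, I)`. In block form
`J_Z = [[J_X, e₁ wᵗ], [0, I]]`, where `J_X = [[1, e^{-V}], [0, 1]]` is the jump of `X` and
`w = (e^{a_k x - V(x)})_k`. Since `X₊ = X₋ J_X`, the upper-left block of the product is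
`X₋ J_X X₊⁻¹ = I`, and the upper-right block is `X₋ e₁ wᵗ = x wᵗ` because the first column of `X`
is the polynomial vector `x`, which passes to the boundary. Analyticity and existence of boundary
values of `M` hold because `X⁻¹` is a rational function of the entries of `X` with denominator
`det X ≠ 0`.
-/

open Topology

section Analytic

variable {𝕜 n : Type*} [NontriviallyNormedField 𝕜] [Fintype n] [DecidableEq n]
  {A : 𝕜 → Matrix n n 𝕜} {z : 𝕜}

theorem analyticAt_det_of_analyticAt_apply (hA : ∀ i j, AnalyticAt 𝕜 (fun w => A w i j) z) :
    AnalyticAt 𝕜 (fun w => (A w).det) z := by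
  simp only [det_apply']
  exact Finset.analyticAt_fun_sum _ fun σ _ =>
    analyticAt_const.mul (Finset.analyticAt_fun_prod _ fun i _ => hA (σ i) i)

theorem analyticAt_adjugate_apply (hA : ∀ i j, AnalyticAt 𝕜 (fun w => A w i j) z) (i j : n) :
    AnalyticAt 𝕜 (fun w => (A w).adjugate i j) z := by
  simp only [adjugate_apply]
  refine analyticAt_det_of_analyticAt_apply fun k l => ?_
  simp only [updateRow_apply]
  split_ifs
  · exact analyticAt_const
  · exact hA k l

theorem analyticAt_inv_apply (hA : ∀ i j, AnalyticAt 𝕜 (fun w => A w i j) z)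
    (hdet : (A z).det ≠ 0) (i j : n) : AnalyticAt 𝕜 (fun w => (A w)⁻¹ i j) z := by
  simp only [inv_def, Matrix.smul_apply, Ring.inverse_eq_inv', smul_eq_mul]
  exact ((analyticAt_det_of_analyticAt_apply hA).inv hdet).mul (analyticAt_adjugate_apply hA i j)

theorem analyticAt_mul_fromBlocks_inv_apply {m : Type*} [Fintype m] [DecidableEq m]
    {Z : 𝕜 → Matrix (n ⊕ m) (n ⊕ m) 𝕜} (hZ : ∀ i j, AnalyticAt 𝕜 (fun w => Z w i j) z)
    (hA : ∀ i j, AnalyticAt 𝕜 (fun w => A w i j) z) (hdet : (A z).det ≠ 0) (i j : n ⊕ m) :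
    AnalyticAt 𝕜 (fun w => (Z w * fromBlocks (A w)⁻¹ 0 0 1 : Matrix (n ⊕ m) (n ⊕ m) 𝕜) i j) z := by
  simp only [mul_apply]
  refine Finset.analyticAt_fun_sum _ fun k _ => (hZ i k).mul ?_
  rcases k with k | k <;> rcases j with l | l
  · exact analyticAt_inv_apply hA hdet k l
  all_goals exact analyticAt_const

end Analytic

section BoundaryValues

variable {α 𝕜 n m : Type*} [Field 𝕜] [TopologicalSpace 𝕜] [IsTopologicalDivisionRing 𝕜]
  [Fintype n] [DecidableEq n] [Fintype m] [DecidableEq m]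
  {Z : α → Matrix (n ⊕ m) (n ⊕ m) 𝕜} {A : α → Matrix n n 𝕜}

theorem Filter.Tendsto.mul_fromBlocks_inv {l : Filter α} {Z₀ : Matrix (n ⊕ m) (n ⊕ m) 𝕜}
    {A₀ : Matrix n n 𝕜} (hZ : Tendsto Z l (𝓝 Z₀)) (hA : Tendsto A l (𝓝 A₀)) (hdet : A₀.det ≠ 0) :
    Tendsto (fun a => Z a * fromBlocks (A a)⁻¹ 0 0 1) l (𝓝 (Z₀ * fromBlocks A₀⁻¹ 0 0 1)) := by
  have hinv : ContinuousAt Inv.inv A₀ :=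
    continuousAt_matrix_inv A₀ (by simpa only [Ring.inverse_eq_inv'] using continuousAt_inv₀ hdet)
  have hblocks : Continuous fun B : Matrix n n 𝕜 => fromBlocks B 0 0 (1 : Matrix m m 𝕜) :=
    continuous_id.matrix_fromBlocks continuous_const continuous_const continuous_const
  exact hZ.mul ((hblocks.tendsto _).comp (hinv.tendsto.comp hA))

theorem Continuous.mul_fromBlocks_inv [TopologicalSpace α] (hZ : Continuous Z) (hA : Continuous A)
    (hdet : ∀ a, (A a).det ≠ 0) : Continuous fun a => Z a * fromBlocks (A a)⁻¹ 0 0 1 :=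
  continuous_iff_continuousAt.2 fun a => (hZ.tendsto a).mul_fromBlocks_inv (hA.tendsto a) (hdet a)

end BoundaryValues

theorem Matrix.col_eq_of_tendsto_nhdsWithin {X E m n : Type*} [TopologicalSpace X]
    [TopologicalSpace E] [T2Space E] {A : X → Matrix m n E} {A₀ : Matrix m n E} {s : Set X}
    {z : X} [(𝓝[s] z).NeBot] {c : X → m → E} {j : n}
    (hA : Tendsto A (𝓝[s] z) (𝓝 A₀)) (hcol : ∀ w ∈ s, ∀ i, A w i j = c w i)
    (hc : ContinuousAt c z) : A₀.col j = c z := by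
  have hcol_cont : Continuous fun B : Matrix m n E => B.col j :=
    continuous_pi fun i => continuous_id.matrix_elem i j
  refine tendsto_nhds_unique ((hcol_cont.tendsto A₀).comp hA) ?_
  refine (hc.tendsto.mono_left nhdsWithin_le_nhds).congr' ?_
  filter_upwards [self_mem_nhdsWithin] with w hw
  exact funext fun i => (hcol w hw i).symm

theorem Complex.nhdsWithin_im_neg_neBot (x : ℝ) : (𝓝[{z : ℂ | z.im < 0}] (x : ℂ)).NeBot := by
  rw [← mem_closure_iff_nhdsWithin_neBot, Complex.closure_setOfPred_im_lt]
  simp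

theorem mul_fromBlocks_inv_eq_of_jump {R n m : Type*} [CommRing R] [Fintype n] [DecidableEq n]
    [Fintype m] [DecidableEq m] {Zp Zm : Matrix (n ⊕ m) (n ⊕ m) R} {Xp Xm J : Matrix n n R}
    (B : Matrix n m R) (hZ : Zp = Zm * fromBlocks J B 0 1) (hX : Xp = Xm * J)
    (hXp : IsUnit Xp.det) (hXm : IsUnit Xm.det) :
    Zp * fromBlocks Xp⁻¹ 0 0 1 = Zm * fromBlocks Xm⁻¹ 0 0 1 * fromBlocks 1 (Xm * B) 0 1 := by
  have hJ : J * Xp⁻¹ = Xm⁻¹ :=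
    calc J * Xp⁻¹ = Xm⁻¹ * Xp * Xp⁻¹ := by
          rw [hX, ← Matrix.mul_assoc, nonsing_inv_mul _ hXm, Matrix.one_mul]
      _ = Xm⁻¹ := by rw [Matrix.mul_assoc, mul_nonsing_inv _ hXp, Matrix.mul_one]
  rw [hZ, Matrix.mul_assoc, Matrix.mul_assoc, fromBlocks_multiply, fromBlocks_multiply,
    ← Matrix.mul_assoc, nonsing_inv_mul _ hXm]
  simp [hJ]

theorem continuous_xcol (n : ℕ) (p : ℕ → Polynomial ℝ) (κ : ℕ → ℝ) : Continuous (xcol n p κ) := by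
  refine continuous_pi fun i => ?_
  fin_cases i
  · exact (p n).continuous_aeval
  · exact continuous_const.mul (p (n - 1)).continuous_aeval

theorem JZmat_eq_fromBlocks (r : ℕ) (V : ℝ → ℝ) (a : Fin r → ℝ) (x : ℝ) :
    JZmat r V a x = fromBlocks !![1, Complex.exp ((-(V x) : ℝ) : ℂ); 0, 1]
      (vecMulVec (Pi.single 0 1) fun k => Complex.exp ((a k * x - V x : ℝ) : ℂ)) 0 1 := by
  ext (i | i) (j | j)
  · fin_cases i <;> fin_cases j <;> simp [JZmat, one_apply]
  · fin_cases i <;> simp [JZmat, vecMulVec_apply]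
  · simp [JZmat, one_apply]
  · simp [JZmat, one_apply]

theorem M_solves_RHP_general
    (n r : ℕ)
    (V : ℝ → ℝ)
    (p : ℕ → Polynomial ℝ)
    (κ : ℕ → ℝ)
    (a : Fin r → ℝ)
    (X : ℂ → Matrix (Fin 2) (Fin 2) ℂ)
    (hXan : ∀ z : ℂ, z.im ≠ 0 → ∀ i j, AnalyticAt ℂ (fun w => X w i j) z)
    (hXcol1 : ∀ z : ℂ, z.im ≠ 0 → ∀ i, X z i 0 = xcol n p κ z i)
    (hXdet : ∀ z : ℂ, z.im ≠ 0 → (X z).det = 1)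
    (Xp Xm : ℝ → Matrix (Fin 2) (Fin 2) ℂ)
    (hXp : ∀ x : ℝ, Tendsto X (nhdsWithin (x : ℂ) {z : ℂ | 0 < z.im}) (nhds (Xp x)))
    (hXm : ∀ x : ℝ, Tendsto X (nhdsWithin (x : ℂ) {z : ℂ | z.im < 0}) (nhds (Xm x)))
    (hXpcont : Continuous Xp) (hXmcont : Continuous Xm)
    (hXjump : ∀ x : ℝ, Xp x = Xm x * !![1, Complex.exp ((-(V x) : ℝ) : ℂ); 0, 1])
    (hXpdet : ∀ x : ℝ, (Xp x).det = 1) (hXmdet : ∀ x : ℝ, (Xm x).det = 1)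
    (Z : ℂ → Matrix (Fin 2 ⊕ Fin r) (Fin 2 ⊕ Fin r) ℂ)
    (hZan : ∀ z : ℂ, z.im ≠ 0 → ∀ i j, AnalyticAt ℂ (fun w => Z w i j) z)
    (Zp Zm : ℝ → Matrix (Fin 2 ⊕ Fin r) (Fin 2 ⊕ Fin r) ℂ)
    (hZp : ∀ x : ℝ, Tendsto Z (nhdsWithin (x : ℂ) {z : ℂ | 0 < z.im}) (nhds (Zp x)))
    (hZm : ∀ x : ℝ, Tendsto Z (nhdsWithin (x : ℂ) {z : ℂ | z.im < 0}) (nhds (Zm x)))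
    (hZpcont : Continuous Zp) (hZmcont : Continuous Zm)
    (hjump : ∀ x : ℝ, Zp x = Zm x * JZmat r V a x)
 :
    (∀ z : ℂ, z.im ≠ 0 → ∀ i j, AnalyticAt ℂ (fun w => Mfun r Z X w i j) z) ∧
    ∃ Mp Mm : ℝ → Matrix (Fin 2 ⊕ Fin r) (Fin 2 ⊕ Fin r) ℂ,
      Continuous Mp ∧ Continuous Mm ∧
      (∀ x : ℝ, Tendsto (Mfun r Z X) (nhdsWithin (x : ℂ) {z : ℂ | 0 < z.im}) (nhds (Mp x))) ∧
      (∀ x : ℝ, Tendsto (Mfun r Z X) (nhdsWithin (x : ℂ) {z : ℂ | z.im < 0}) (nhds (Mm x))) ∧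
      ∀ x : ℝ, Mp x = Mm x * JMmat n r V p κ a x := by
  have det_ne_zero {A : Matrix (Fin 2) (Fin 2) ℂ} (h : A.det = 1) : A.det ≠ 0 := h ▸ one_ne_zero
  have hXm_col (x : ℝ) : (Xm x).col 0 = xcol n p κ x :=
    haveI := Complex.nhdsWithin_im_neg_neBot x
    col_eq_of_tendsto_nhdsWithin (hXm x) (fun z hz => hXcol1 z hz.ne)
      (continuous_xcol n p κ).continuousAt
  refine ⟨fun z hz => analyticAt_mul_fromBlocks_inv_apply (hZan z hz) (hXan z hz)
      (det_ne_zero (hXdet z hz)), fun x => Zp x * fromBlocks (Xp x)⁻¹ 0 0 1,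
    fun x => Zm x * fromBlocks (Xm x)⁻¹ 0 0 1,
    hZpcont.mul_fromBlocks_inv hXpcont fun x => det_ne_zero (hXpdet x),
    hZmcont.mul_fromBlocks_inv hXmcont fun x => det_ne_zero (hXmdet x),
    fun x => (hZp x).mul_fromBlocks_inv (hXp x) (det_ne_zero (hXpdet x)),
    fun x => (hZm x).mul_fromBlocks_inv (hXm x) (det_ne_zero (hXmdet x)), fun x => ?_⟩
  beta_reduce
  rw [mul_fromBlocks_inv_eq_of_jump _ (by rw [hjump x, JZmat_eq_fromBlocks]) (hXjump x)
    (by simp [hXpdet]) (by simp [hXmdet]), mul_vecMulVec, mulVec_single_one, hXm_col]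
  rfl

/-- `M = Z · diag(X⁻¹, I_r)` is analytic off `ℝ`, has continuous boundary values, and
satisfies the jump relation `M₊(x) = M₋(x) J_M(x)` on `ℝ`. -/
theorem M_solves_RHP
    (n r : ℕ) (hr : 1 ≤ r) (hnr : r ≤ n)
    (V : ℝ → ℝ) (hV : Continuous V)
    (hVint : ∀ (c : ℝ) (k : ℕ), Integrable (fun x : ℝ => |x| ^ k * Real.exp (c * x - V x)))
    (p : ℕ → Polynomial ℝ)
    (hmonic : ∀ k, (p k).Monic)
    (hdeg : ∀ k, (p k).natDegree = k)
    (horth : ∀ k m, k ≠ m → ∫ x : ℝ, (p k).eval x * (p m).eval x * Real.exp (-V x) = 0)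
    (κ : ℕ → ℝ) (hκpos : ∀ k, 0 < κ k)
    (hκ : ∀ k, ∫ x : ℝ, ((p k).eval x) ^ 2 * Real.exp (-V x) = ((κ k) ^ 2)⁻¹)
    (a : Fin r → ℝ) (ha : StrictAnti a) (ha0 : ∀ j, a j ≠ 0)
    (X : ℂ → Matrix (Fin 2) (Fin 2) ℂ)
    (hXan : ∀ z : ℂ, z.im ≠ 0 → ∀ i j, AnalyticAt ℂ (fun w => X w i j) z)
    (hXcol1 : ∀ z : ℂ, z.im ≠ 0 → ∀ i, X z i 0 = xcol n p κ z i)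
    (hXcol2 : ∀ z : ℂ, z.im ≠ 0 → ∀ i, X z i 1 =
      (2 * Real.pi * Complex.I)⁻¹ *
        ∫ s : ℝ, xcol n p κ (s : ℂ) i * ((Real.exp (-V s) : ℝ) : ℂ) / ((s : ℂ) - z))
    (hXdet : ∀ z : ℂ, z.im ≠ 0 → (X z).det = 1)
    (Xp Xm : ℝ → Matrix (Fin 2) (Fin 2) ℂ)
    (hXp : ∀ x : ℝ, Tendsto X (nhdsWithin (x : ℂ) {z : ℂ | 0 < z.im}) (nhds (Xp x)))
    (hXm : ∀ x : ℝ, Tendsto X (nhdsWithin (x : ℂ) {z : ℂ | z.im < 0}) (nhds (Xm x)))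
    (hXpcont : Continuous Xp) (hXmcont : Continuous Xm)
    (hXjump : ∀ x : ℝ, Xp x = Xm x * !![1, Complex.exp ((-(V x) : ℝ) : ℂ); 0, 1])
    (hXpdet : ∀ x : ℝ, (Xp x).det = 1) (hXmdet : ∀ x : ℝ, (Xm x).det = 1)
    (Z : ℂ → Matrix (Fin 2 ⊕ Fin r) (Fin 2 ⊕ Fin r) ℂ)
    (hZan : ∀ z : ℂ, z.im ≠ 0 → ∀ i j, AnalyticAt ℂ (fun w => Z w i j) z)
    (hZunit : ∀ z : ℂ, z.im ≠ 0 → IsUnit (Z z))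
    (Zp Zm : ℝ → Matrix (Fin 2 ⊕ Fin r) (Fin 2 ⊕ Fin r) ℂ)
    (hZp : ∀ x : ℝ, Tendsto Z (nhdsWithin (x : ℂ) {z : ℂ | 0 < z.im}) (nhds (Zp x)))
    (hZm : ∀ x : ℝ, Tendsto Z (nhdsWithin (x : ℂ) {z : ℂ | z.im < 0}) (nhds (Zm x)))
    (hZpcont : Continuous Zp) (hZmcont : Continuous Zm)
    (hjump : ∀ x : ℝ, Zp x = Zm x * JZmat r V a x)
    (hasymp : ∀ i j, (fun z : ℂ => (Z z * DinvM n r z - 1) i j)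
        =O[Bornology.cobounded ℂ] fun z => ‖z‖⁻¹)
 :
    (∀ z : ℂ, z.im ≠ 0 → ∀ i j, AnalyticAt ℂ (fun w => Mfun r Z X w i j) z) ∧
    ∃ Mp Mm : ℝ → Matrix (Fin 2 ⊕ Fin r) (Fin 2 ⊕ Fin r) ℂ,
      Continuous Mp ∧ Continuous Mm ∧
      (∀ x : ℝ, Tendsto (Mfun r Z X) (nhdsWithin (x : ℂ) {z : ℂ | 0 < z.im}) (nhds (Mp x))) ∧
      (∀ x : ℝ, Tendsto (Mfun r Z X) (nhdsWithin (x : ℂ) {z : ℂ | z.im < 0}) (nhds (Mm x))) ∧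
      ∀ x : ℝ, Mp x = Mm x * JMmat n r V p κ a x :=
  M_solves_RHP_general n r V p κ a X hXan hXcol1 hXdet Xp Xm hXp hXm hXpcont hXmcont hXjump hXpdet
    hXmdet Z hZan Zp Zm hZp hZm hZpcont hZmcont hjump

end
end

section
/- Under the hypotheses of the preceding statements, for real x ≠ y: 2πi (K(x,y) − K₀(x,y)) e^{V(x)} (x − y) = (−X₂₁(y), X₁₁(y), e^{a_1 y}, ..., e^{a_r y}) · (M₊(y)^{-1} M₊(x) − I_{r+2}) · (X₁₁(x), X₂₁(x), 0, ..., 0)^t, where X₁₁(z) = π_n(z) and X₂₁(z) = −2πi κ_{n-1}² π_{n-1}(z). -/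
open MeasureTheory Filter Matrix Asymptotics Polynomial

noncomputable section

/-- The Christoffel–Darboux kernel `K₀`. -/
def K0ker (n : ℕ) (V : ℝ → ℝ) (p : ℕ → Polynomial ℝ) (κ : ℕ → ℝ) (x y : ℝ) : ℝ :=
  Real.exp (-V x) * (κ (n - 1)) ^ 2 *
    ((p n).eval x * (p (n - 1)).eval y - (p (n - 1)).eval x * (p n).eval y) / (x - y)

/-- The column vector `e₁ = (1,0,...,0)^t`. -/
def e1vec (r : ℕ) : (Fin 2 ⊕ Fin r) → ℂ := Sum.elim ![1, 0] 0

/-- The row vector `(0, 1, e^{a_1 y}, ..., e^{a_r y})`. -/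
def rowvec (r : ℕ) (a : Fin r → ℝ) (y : ℝ) : (Fin 2 ⊕ Fin r) → ℂ :=
  Sum.elim ![0, 1] fun k => Complex.exp ((a k * y : ℝ) : ℂ)

/-- The correlation kernel `K` built from the boundary values `Z₊`. -/
def Kker (r : ℕ) (V : ℝ → ℝ) (a : Fin r → ℝ)
    (Zp : ℝ → Matrix (Fin 2 ⊕ Fin r) (Fin 2 ⊕ Fin r) ℂ) (x y : ℝ) : ℂ :=
  Complex.exp ((-(V x) : ℝ) : ℂ) / (2 * Real.pi * Complex.I * ((x : ℂ) - (y : ℂ))) *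
    (rowvec r a y ⬝ᵥ (((Zp y)⁻¹ * Zp x) *ᵥ e1vec r))

open Topology

/-! Since `M₊ = Z₊ · diag(X₊⁻¹, I)`, conjugating `M₊(y)⁻¹ M₊(x)` back gives
`diag(X₊(y), I) · Z₊(y)⁻¹ Z₊(x) · diag(X₊(x)⁻¹, I)`. The column vector is `diag(X₊(x), I) e₁`,
because the first column of `X₊` is `(π_n, −2πi κ_{n-1}² π_{n-1})`, and the row vector times
`diag(X₊(y), I)` is `(0, 1, e^{a_1 y}, ..., e^{a_r y})`, because `det X₊ = 1`. Hence the `M₊`-term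
is the `K`-term, while the `−I`-term is the Christoffel–Darboux numerator of `K₀`. -/

namespace Matrix

variable {m n R : Type*} [Fintype m] [Fintype n] [DecidableEq n]

theorem inv_fromBlocks_zero_zero_one [DecidableEq m] [CommRing R] {A : Matrix m m R}
    (hA : IsUnit A) :
    (fromBlocks A 0 0 1 : Matrix (m ⊕ n) (m ⊕ n) R)⁻¹ = fromBlocks A⁻¹ 0 0 1 := by
  simpa using inv_fromBlocks_zero₂₁_of_isUnit_iff A (0 : Matrix m n R) 1 (by simp [hA])

theorem fromBlocks_zero_zero_one_mulVec [Semiring R] (A : Matrix m m R) (u : m → R)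
    (f : n → R) : fromBlocks A 0 0 1 *ᵥ Sum.elim u f = Sum.elim (A *ᵥ u) f := by
  rw [fromBlocks_mulVec]; simp

theorem sumElim_vecMul_fromBlocks_zero_zero_one [Semiring R] (A : Matrix m m R) (u : m → R)
    (f : n → R) : Sum.elim u f ᵥ* fromBlocks A 0 0 1 = Sum.elim (u ᵥ* A) f := by
  rw [vecMul_fromBlocks]; simp

theorem rotated_col_zero_vecMul_fin_two [CommRing R] (A : Matrix (Fin 2) (Fin 2) R) :
    ![-A 1 0, A 0 0] ᵥ* A = ![0, A.det] := by
  ext i; fin_cases i <;> simp [vecMul, dotProduct, det_fin_two] <;> ring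

theorem dotProduct_inv_mul_sub_one_mulVec [CommRing R] (A B F G : Matrix n n R)
    (hF : IsUnit F.det) (hG : IsUnit G.det) (v u : n → R) :
    v ⬝ᵥ (((A * F⁻¹)⁻¹ * (B * G⁻¹) - 1) *ᵥ (G *ᵥ u))
      = (v ᵥ* F) ⬝ᵥ ((A⁻¹ * B) *ᵥ u) - v ⬝ᵥ (G *ᵥ u) := by
  rw [mul_inv_rev, nonsing_inv_nonsing_inv F hF, sub_mulVec, one_mulVec, dotProduct_sub,
    ← dotProduct_mulVec, mulVec_mulVec, mulVec_mulVec]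
  congr 2
  simp only [Matrix.mul_assoc, nonsing_inv_mul G hG, Matrix.mul_one]

end Matrix

theorem eq_of_tendsto_nhdsWithin_of_eqOn {α β : Type*} [TopologicalSpace α]
    [TopologicalSpace β] [T2Space β] {f g : α → β} {s : Set α} {x : α} {L : β}
    [(𝓝[s] x).NeBot] (hfg : Set.EqOn f g s) (hg : ContinuousWithinAt g s x)
    (hf : Tendsto f (𝓝[s] x) (𝓝 L)) : L = g x :=
  tendsto_nhds_unique (hf.congr' (eventuallyEq_nhdsWithin_of_eqOn hfg)) hg

instance nhdsWithin_upperHalfPlane_neBot (x : ℝ) : (𝓝[{z : ℂ | 0 < z.im}] (x : ℂ)).NeBot :=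
  mem_closure_iff_nhdsWithin_neBot.mp (by simp)

theorem Complex.aeval_ofReal (p : Polynomial ℝ) (t : ℝ) :
    aeval (t : ℂ) p = ((p.eval t : ℝ) : ℂ) := by
  rw [← Complex.coe_algebraMap, aeval_algebraMap_apply_eq_algebraMap_eval]

theorem tendsto_inv_fromBlocks_zero_zero_one {α 𝕜 m n : Type*} [NormedField 𝕜] [Fintype m]
    [Fintype n] [DecidableEq m] [DecidableEq n] {l : Filter α} {X : α → Matrix m m 𝕜}
    {L : Matrix m m 𝕜} (hX : Tendsto X l (𝓝 L)) (hL : IsUnit L.det) :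
    Tendsto (fun z => (Matrix.fromBlocks (X z)⁻¹ 0 0 1 : Matrix (m ⊕ n) (m ⊕ n) 𝕜)) l
      (𝓝 (Matrix.fromBlocks L 0 0 1)⁻¹) := by
  have hinv : ContinuousAt Inv.inv L :=
    continuousAt_matrix_inv L (Ring.inverse_eq_inv' (G₀ := 𝕜) ▸ continuousAt_inv₀ hL.ne_zero)
  rw [Matrix.inv_fromBlocks_zero_zero_one ((Matrix.isUnit_iff_isUnit_det L).mpr hL)]
  exact ((continuous_id.matrix_fromBlocks continuous_const continuous_const
    continuous_const).tendsto _).comp (hinv.tendsto.comp hX)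

theorem Mfun_limit_eq {r : ℕ} {Z : ℂ → Matrix (Fin 2 ⊕ Fin r) (Fin 2 ⊕ Fin r) ℂ}
    {X : ℂ → Matrix (Fin 2) (Fin 2) ℂ} {s : Set ℂ} {z₀ : ℂ} [(𝓝[s] z₀).NeBot]
    {L : Matrix (Fin 2) (Fin 2) ℂ} {Zb Mb : Matrix (Fin 2 ⊕ Fin r) (Fin 2 ⊕ Fin r) ℂ}
    (hX : Tendsto X (𝓝[s] z₀) (𝓝 L)) (hL : IsUnit L.det) (hZ : Tendsto Z (𝓝[s] z₀) (𝓝 Zb))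
    (hM : Tendsto (Mfun r Z X) (𝓝[s] z₀) (𝓝 Mb)) :
    Mb = Zb * (Matrix.fromBlocks L 0 0 1)⁻¹ :=
  tendsto_nhds_unique hM (hZ.mul (tendsto_inv_fromBlocks_zero_zero_one hX hL))

theorem two_pi_I_mul_Kker (r : ℕ) (V : ℝ → ℝ) (a : Fin r → ℝ)
    (Zp : ℝ → Matrix (Fin 2 ⊕ Fin r) (Fin 2 ⊕ Fin r) ℂ) {x y : ℝ} (hxy : x ≠ y) :
    2 * Real.pi * Complex.I * Kker r V a Zp x y * Complex.exp ((V x : ℝ) : ℂ) *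
        ((x : ℂ) - (y : ℂ))
      = rowvec r a y ⬝ᵥ (((Zp y)⁻¹ * Zp x) *ᵥ e1vec r) := by
  have hxy' : (x : ℂ) - (y : ℂ) ≠ 0 := sub_ne_zero.mpr (by exact_mod_cast hxy)
  have hπ : 2 * (Real.pi : ℂ) * Complex.I ≠ 0 := by simp [Real.pi_ne_zero]
  rw [Kker, Complex.ofReal_neg, Complex.exp_neg]
  field_simp

theorem two_pi_I_mul_K0ker (n : ℕ) (V : ℝ → ℝ) (p : ℕ → Polynomial ℝ) (κ : ℕ → ℝ)
    (r : ℕ) (e : Fin r → ℂ) {x y : ℝ} (hxy : x ≠ y) :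
    2 * Real.pi * Complex.I * (K0ker n V p κ x y : ℂ) * Complex.exp ((V x : ℝ) : ℂ) *
        ((x : ℂ) - (y : ℂ))
      = Sum.elim ![-(xcol n p κ (y : ℂ) 1), xcol n p κ (y : ℂ) 0] e
          ⬝ᵥ Sum.elim ![xcol n p κ (x : ℂ) 0, xcol n p κ (x : ℂ) 1] 0 := by
  have hxy' : (x : ℂ) - (y : ℂ) ≠ 0 := sub_ne_zero.mpr (by exact_mod_cast hxy)
  rw [sumElim_dotProduct_sumElim, dotProduct_zero, add_zero, K0ker]
  simp only [xcol, Complex.aeval_ofReal, dotProduct, Fin.sum_univ_two, Matrix.cons_val_zero,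
    Matrix.cons_val_one]
  push_cast
  rw [Complex.exp_neg]
  field_simp
  ring

theorem kernel_difference_via_M_general
    (n r : ℕ) (V : ℝ → ℝ) (p : ℕ → Polynomial ℝ) (κ : ℕ → ℝ) (a : Fin r → ℝ)
    (X : ℂ → Matrix (Fin 2) (Fin 2) ℂ)
    (hXcol1 : ∀ z : ℂ, z.im ≠ 0 → ∀ i, X z i 0 = xcol n p κ z i)
    (Xp : ℝ → Matrix (Fin 2) (Fin 2) ℂ)
    (hXp : ∀ x : ℝ, Tendsto X (nhdsWithin (x : ℂ) {z : ℂ | 0 < z.im}) (nhds (Xp x)))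
    (hXpdet : ∀ x : ℝ, (Xp x).det = 1)
    (Z : ℂ → Matrix (Fin 2 ⊕ Fin r) (Fin 2 ⊕ Fin r) ℂ)
    (Zp : ℝ → Matrix (Fin 2 ⊕ Fin r) (Fin 2 ⊕ Fin r) ℂ)
    (hZp : ∀ x : ℝ, Tendsto Z (nhdsWithin (x : ℂ) {z : ℂ | 0 < z.im}) (nhds (Zp x)))
    (Mp : ℝ → Matrix (Fin 2 ⊕ Fin r) (Fin 2 ⊕ Fin r) ℂ)
    (hMp : ∀ x : ℝ, Tendsto (Mfun r Z X) (nhdsWithin (x : ℂ) {z : ℂ | 0 < z.im}) (nhds (Mp x))) :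
    ∀ x y : ℝ, x ≠ y →
      2 * Real.pi * Complex.I * (Kker r V a Zp x y - (K0ker n V p κ x y : ℂ)) *
          Complex.exp ((V x : ℝ) : ℂ) * ((x : ℂ) - (y : ℂ))
        = (Sum.elim ![-(xcol n p κ (y : ℂ) 1), xcol n p κ (y : ℂ) 0]
              (fun k => Complex.exp ((a k * y : ℝ) : ℂ)))
            ⬝ᵥ ((((Mp y)⁻¹ * Mp x - 1)) *ᵥ
              (Sum.elim ![xcol n p κ (x : ℂ) 0, xcol n p κ (x : ℂ) 1] 0)) := by
  intro x y hxy
  have hXpunit (t : ℝ) : IsUnit (Xp t).det := by rw [hXpdet t]; exact isUnit_one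
  have hcol (t : ℝ) (i : Fin 2) : Xp t i 0 = xcol n p κ t i :=
    congrFun (eq_of_tendsto_nhdsWithin_of_eqOn (fun z hz => funext (hXcol1 z hz.ne'))
      (continuous_xcol n p κ).continuousWithinAt
      ((continuous_pi fun i => continuous_apply_apply i 0).tendsto _ |>.comp (hXp t))) i
  let F (t : ℝ) : Matrix (Fin 2 ⊕ Fin r) (Fin 2 ⊕ Fin r) ℂ := Matrix.fromBlocks (Xp t) 0 0 1
  have hM (t : ℝ) : Mp t = Zp t * (F t)⁻¹ :=
    Mfun_limit_eq (hXp t) (hXpunit t) (hZp t) (hMp t)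
  have hF (t : ℝ) : IsUnit (F t).det := by
    simpa [F, Matrix.det_fromBlocks_zero₂₁] using hXpunit t
  have hcolx : Sum.elim ![xcol n p κ (x : ℂ) 0, xcol n p κ (x : ℂ) 1] 0 = F x *ᵥ e1vec r := by
    rw [e1vec, Matrix.fromBlocks_zero_zero_one_mulVec, ← hcol, ← hcol]
    congr 1; ext i; fin_cases i <;> simp [Matrix.mulVec, dotProduct]
  have hrow : Sum.elim ![-(xcol n p κ (y : ℂ) 1), xcol n p κ (y : ℂ) 0]
      (fun k => Complex.exp ((a k * y : ℝ) : ℂ)) ᵥ* F y = rowvec r a y := by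
    rw [Matrix.sumElim_vecMul_fromBlocks_zero_zero_one, ← hcol, ← hcol,
      Matrix.rotated_col_zero_vecMul_fin_two, hXpdet, rowvec]
  rw [hM x, hM y, hcolx, Matrix.dotProduct_inv_mul_sub_one_mulVec _ _ _ _ (hF y) (hF x), hrow,
    ← hcolx, ← two_pi_I_mul_Kker r V a Zp hxy, ← two_pi_I_mul_K0ker n V p κ r _ hxy]
  ring

/-- Transfer of the kernel difference to the boundary values of `M`:
`2πi (K(x,y) − K₀(x,y)) e^{V(x)} (x − y)
  = (−X₂₁(y), X₁₁(y), e^{a_1 y}, ..., e^{a_r y}) (M₊(y)⁻¹ M₊(x) − I) (X₁₁(x), X₂₁(x), 0, ..., 0)^t`. -/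
theorem kernel_difference_via_M
    (n r : ℕ) (hr : 1 ≤ r) (hnr : r ≤ n)
    (V : ℝ → ℝ) (hV : Continuous V)
    (hVint : ∀ (c : ℝ) (k : ℕ), Integrable (fun x : ℝ => |x| ^ k * Real.exp (c * x - V x)))
    (p : ℕ → Polynomial ℝ)
    (hmonic : ∀ k, (p k).Monic)
    (hdeg : ∀ k, (p k).natDegree = k)
    (horth : ∀ k m, k ≠ m → ∫ x : ℝ, (p k).eval x * (p m).eval x * Real.exp (-V x) = 0)
    (κ : ℕ → ℝ) (hκpos : ∀ k, 0 < κ k)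
    (hκ : ∀ k, ∫ x : ℝ, ((p k).eval x) ^ 2 * Real.exp (-V x) = ((κ k) ^ 2)⁻¹)
    (a : Fin r → ℝ) (ha : StrictAnti a) (ha0 : ∀ j, a j ≠ 0)
    (X : ℂ → Matrix (Fin 2) (Fin 2) ℂ)
    (hXan : ∀ z : ℂ, z.im ≠ 0 → ∀ i j, AnalyticAt ℂ (fun w => X w i j) z)
    (hXcol1 : ∀ z : ℂ, z.im ≠ 0 → ∀ i, X z i 0 = xcol n p κ z i)
    (hXcol2 : ∀ z : ℂ, z.im ≠ 0 → ∀ i, X z i 1 =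
      (2 * Real.pi * Complex.I)⁻¹ *
        ∫ s : ℝ, xcol n p κ (s : ℂ) i * ((Real.exp (-V s) : ℝ) : ℂ) / ((s : ℂ) - z))
    (hXdet : ∀ z : ℂ, z.im ≠ 0 → (X z).det = 1)
    (Xp Xm : ℝ → Matrix (Fin 2) (Fin 2) ℂ)
    (hXp : ∀ x : ℝ, Tendsto X (nhdsWithin (x : ℂ) {z : ℂ | 0 < z.im}) (nhds (Xp x)))
    (hXm : ∀ x : ℝ, Tendsto X (nhdsWithin (x : ℂ) {z : ℂ | z.im < 0}) (nhds (Xm x)))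
    (hXpcont : Continuous Xp) (hXmcont : Continuous Xm)
    (hXjump : ∀ x : ℝ, Xp x = Xm x * !![1, Complex.exp ((-(V x) : ℝ) : ℂ); 0, 1])
    (hXpdet : ∀ x : ℝ, (Xp x).det = 1) (hXmdet : ∀ x : ℝ, (Xm x).det = 1)
    (Z : ℂ → Matrix (Fin 2 ⊕ Fin r) (Fin 2 ⊕ Fin r) ℂ)
    (hZan : ∀ z : ℂ, z.im ≠ 0 → ∀ i j, AnalyticAt ℂ (fun w => Z w i j) z)
    (hZunit : ∀ z : ℂ, z.im ≠ 0 → IsUnit (Z z))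
    (Zp Zm : ℝ → Matrix (Fin 2 ⊕ Fin r) (Fin 2 ⊕ Fin r) ℂ)
    (hZp : ∀ x : ℝ, Tendsto Z (nhdsWithin (x : ℂ) {z : ℂ | 0 < z.im}) (nhds (Zp x)))
    (hZm : ∀ x : ℝ, Tendsto Z (nhdsWithin (x : ℂ) {z : ℂ | z.im < 0}) (nhds (Zm x)))
    (hZpcont : Continuous Zp) (hZmcont : Continuous Zm)
    (hjump : ∀ x : ℝ, Zp x = Zm x * JZmat r V a x)
    (hasymp : ∀ i j, (fun z : ℂ => (Z z * DinvM n r z - 1) i j)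
        =O[Bornology.cobounded ℂ] fun z => ‖z‖⁻¹)
    (Mp Mm : ℝ → Matrix (Fin 2 ⊕ Fin r) (Fin 2 ⊕ Fin r) ℂ)
    (hMp : ∀ x : ℝ, Tendsto (Mfun r Z X) (nhdsWithin (x : ℂ) {z : ℂ | 0 < z.im}) (nhds (Mp x)))
    (hMm : ∀ x : ℝ, Tendsto (Mfun r Z X) (nhdsWithin (x : ℂ) {z : ℂ | z.im < 0}) (nhds (Mm x)))
    (hZpunit : ∀ x : ℝ, IsUnit (Zp x)) :
    ∀ x y : ℝ, x ≠ y →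
      2 * Real.pi * Complex.I * (Kker r V a Zp x y - (K0ker n V p κ x y : ℂ)) *
          Complex.exp ((V x : ℝ) : ℂ) * ((x : ℂ) - (y : ℂ))
        = (Sum.elim ![-(xcol n p κ (y : ℂ) 1), xcol n p κ (y : ℂ) 0]
              (fun k => Complex.exp ((a k * y : ℝ) : ℂ)))
            ⬝ᵥ ((((Mp y)⁻¹ * Mp x - 1)) *ᵥ
              (Sum.elim ![xcol n p κ (x : ℂ) 0, xcol n p κ (x : ℂ) 1] 0)) :=
  kernel_difference_via_M_general n r V p κ a X hXcol1 Xp hXp hXpdet Z Zp hZp Mp hMp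

end
end
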